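/- (Irreducibility is preserved by duality) Let $\Pi(\Delta) = \{\Delta_1, \dots, \Delta_s\}$ be a generalized nef partition of a lattice polytope and $\Pi(\nabla) = \{\nabla_1, \dots, \nabla_s\}$ its dual generalized nef partition. If $\Pi(\Delta)$ is irreducible, then $\Pi(\nabla)$ is irreducible. -/

import Mathlib

open scoped RealInnerProductSpace Pointwise

namespace GNPPaper

variable {d s : ℕ}

abbrev E (d : ℕ) := EuclideanSpace ℝ (Fin d)

/-- Polar with the paper's sign convention `⟨x,y⟩ ≥ -1`. -/
def pol (A : Set (E d)) : Set (E d) := {y | ∀ x ∈ A, (-1 : ℝ) ≤ (inner ℝ x y : ℝ)}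

/-- Vertices = extreme points. -/
def Vert (A : Set (E d)) : Set (E d) := Set.extremePoints ℝ A

/-- Indicator function of a set. -/
noncomputable def ind (I : Set (E d)) (v : E d) : ℝ := I.indicator (fun _ => 1) v

/-- The piece `Δ_i` associated to a part `I` of the vertices of the polar of `A`. -/
def pieceD (A : Set (E d)) (I : Set (E d)) : Set (E d) :=
  {m | ∀ v ∈ Vert (pol A), -(ind I v) ≤ (inner ℝ m v : ℝ)}

def IsPolytope (A : Set (E d)) : Prop :=
  ∃ F : Finset (E d), A = convexHull ℝ (F : Set (E d))

def IsVertPartition (A : Set (E d)) (I : Fin s → Set (E d)) : Prop :=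
  (∀ i, I i ⊆ Vert (pol A)) ∧ ∀ v ∈ Vert (pol A), ∃! i, v ∈ I i

/-- `I` induces a generalized nef partition of `A`. -/
def IsGNP (A : Set (E d)) (I : Fin s → Set (E d)) : Prop :=
  IsPolytope A ∧ (0 : E d) ∈ interior A ∧ IsVertPartition A I ∧
    (∑ i, pieceD A (I i)) = A

/-- The dual piece `∇_j`. -/
def pieceN (A : Set (E d)) (I : Fin s → Set (E d)) (j : Fin s) : Set (E d) :=
  {y | ∀ i : Fin s, ∀ m ∈ pieceD A (I i), -(if i = j then (1:ℝ) else 0) ≤ (inner ℝ m y : ℝ)}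

def nab (A : Set (E d)) (I : Fin s → Set (E d)) : Set (E d) := ∑ j, pieceN A I j

/-- A facet: a nonempty proper face of codimension one. -/
def IsFacet (A F : Set (E d)) : Prop :=
  IsExtreme ℝ A F ∧ F.Nonempty ∧ F ≠ A ∧
    Module.finrank ℝ ↥(vectorSpan ℝ F) + 1 = d

/-- Cone of nonnegative real combinations of elements of `S`. -/
def coneOf (S : Set (E d)) : Set (E d) :=
  {x | ∃ (t : Finset (E d)) (c : E d → ℝ), (t : Set (E d)) ⊆ S ∧ (∀ v, 0 ≤ c v) ∧
      x = ∑ v ∈ t, c v • v}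

def IsLatticeSet (S : Set (E d)) : Prop := ∀ v ∈ S, ∀ k : Fin d, ∃ z : ℤ, v k = (z : ℝ)

/-- A full-dimensional simplex. -/
def IsSimplex (S : Set (E d)) : Prop :=
  ∃ F : Finset (E d), S = convexHull ℝ (F : Set (E d)) ∧ F.card = d + 1 ∧
    AffineIndependent ℝ (fun v : F => (v : E d))

/-- Good pair of generalized nef partitions. -/
def IsGoodPair (A1 A2 : Set (E d)) (I1 I2 : Fin s → Set (E d)) : Prop :=
  IsGNP A1 I1 ∧ IsGNP A2 I2 ∧
  (∀ i, pieceD A1 (I1 i) ⊆ pieceD A2 (I2 i)) ∧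
  (∀ i, IsLatticeSet (Vert (pieceD A1 (I1 i)))) ∧
  IsLatticeSet (Vert A1) ∧ IsLatticeSet (Vert (pol A2)) ∧
  (0 : E d) ∈ interior A1 ∧ (0 : E d) ∈ interior (pol A2)


/-- Reducibility of a generalized nef partition: some proper nonempty group of pieces
has Minkowski sum containing the origin in its relative interior. -/
def IsReduciblePieces (D : Fin s → Set (E d)) : Prop :=
  ∃ P : Finset (Fin s), P.Nonempty ∧ P ≠ Finset.univ ∧
    (0 : E d) ∈ intrinsicInterior ℝ (∑ i ∈ P, D i)


/-! ### Auxiliary lemmas -/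

section SumSets

variable {ι : Type*} {M : Type*} [AddCommMonoid M]

theorem GNP_mem_finsetSum (t : Finset ι) (S : ι → Set M) (f : ι → M)
    (h : ∀ i ∈ t, f i ∈ S i) : (∑ i ∈ t, f i) ∈ ∑ i ∈ t, S i := by
  induction t using Finset.cons_induction with
  | empty => simp
  | cons a t ha ih =>
    rw [Finset.sum_cons, Finset.sum_cons]
    exact Set.add_mem_add (h a (Finset.mem_cons_self _ _))
      (ih fun i hi => h i (Finset.mem_cons_of_mem hi))

theorem GNP_exists_rep [DecidableEq ι] {t : Finset ι} {S : ι → Set M} {x : M}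
    (h : x ∈ ∑ i ∈ t, S i) :
    ∃ f : ι → M, (∀ i ∈ t, f i ∈ S i) ∧ x = ∑ i ∈ t, f i := by
  induction t using Finset.cons_induction generalizing x with
  | empty =>
    refine ⟨fun _ => 0, by simp, ?_⟩
    simpa using h
  | cons a t ha ih =>
    rw [Finset.sum_cons] at h
    rcases Set.mem_add.mp h with ⟨y, hy, z, hz, rfl⟩
    rcases ih hz with ⟨g, hg, rfl⟩
    refine ⟨Function.update g a y, ?_, ?_⟩
    · intro i hi
      rcases Finset.mem_cons.mp hi with rfl | hi'
      · rw [Function.update_self]; exact hy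
      · rw [Function.update_of_ne (by rintro rfl; exact ha hi')]
        exact hg i hi'
    · rw [Finset.sum_cons, Function.update_self]
      congr 1
      apply Finset.sum_congr rfl
      intro i hi
      rw [Function.update_of_ne (by rintro rfl; exact ha hi)]

theorem GNP_convex_finsetSum (t : Finset ι) (S : ι → Set (E d))
    (h : ∀ i ∈ t, Convex ℝ (S i)) : Convex ℝ (∑ i ∈ t, S i) := by
  induction t using Finset.cons_induction with
  | empty => simp only [Finset.sum_empty]; exact convex_singleton (𝕜 := ℝ) (0 : E d)
  | cons a t ha ih =>
    rw [Finset.sum_cons]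
    exact Convex.add (h a (Finset.mem_cons_self _ _))
      (ih fun i hi => h i (Finset.mem_cons_of_mem hi))

end SumSets

section Intrinsic

theorem GNP_intrinsicInterior_eq_interior_of_top {F : Type*} [NormedAddCommGroup F]
    [NormedSpace ℝ F] (s : Set F) (h : affineSpan ℝ s = ⊤) :
    intrinsicInterior ℝ s = interior s := by
  let e : ↥(affineSpan ℝ s) ≃ₜ F :=
    { toFun := fun x => (x : F)
      invFun := fun x => ⟨x, by rw [h]; trivial⟩
      left_inv := fun x => rfl
      right_inv := fun x => rfl
      continuous_toFun := continuous_subtype_val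
      continuous_invFun := Continuous.subtype_mk continuous_id (fun x => by rw [h]; trivial) }
  ext x
  rw [intrinsicInterior]
  constructor
  · rintro ⟨y, hy, rfl⟩
    have : ((↑) ⁻¹' s : Set <| affineSpan ℝ s) = e ⁻¹' s := rfl
    rw [this, ← e.preimage_interior] at hy
    exact hy
  · intro hx
    refine ⟨e.symm x, ?_, rfl⟩
    have : ((↑) ⁻¹' s : Set <| affineSpan ℝ s) = e ⁻¹' s := rfl
    rw [this, ← e.preimage_interior]
    exact hx

/-- Characterization of `0 ∈ relint s` for a convex set containing `0`. -/
theorem GNP_zero_mem_intrinsicInterior_iff {F : Type*} [NormedAddCommGroup F]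
    [InnerProductSpace ℝ F] [FiniteDimensional ℝ F] {s : Set F}
    (hconv : Convex ℝ s) (h0 : (0:F) ∈ s) :
    (0:F) ∈ intrinsicInterior ℝ s ↔ ∀ x ∈ s, ∃ ε : ℝ, 0 < ε ∧ -(ε • x) ∈ s := by
  classical
  set V : Submodule ℝ F := Submodule.span ℝ s with hV
  have hsV : s ⊆ (V : Set F) := Submodule.subset_span
  set s' : Set V := ((↑) : V → F) ⁻¹' s with hs'
  have himg : (V.subtypeₗᵢ.toAffineIsometry) '' s' = s := by
    have : (V.subtypeₗᵢ.toAffineIsometry) '' s' = ((↑) : V → F) '' s' := rfl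
    rw [this, Set.image_preimage_eq_inter_range, Subtype.range_coe]
    exact Set.inter_eq_self_of_subset_left hsV
  have hspan' : Submodule.span ℝ s' = (⊤ : Submodule ℝ V) := by
    apply Submodule.map_injective_of_injective (V.injective_subtype)
    rw [Submodule.map_span, Submodule.map_top, Submodule.range_subtype]
    have : (V.subtype) '' s' = s := by
      have h1 : (V.subtype) '' s' = ((↑) : V → F) '' s' := rfl
      rw [h1, Set.image_preimage_eq_inter_range, Subtype.range_coe]
      exact Set.inter_eq_self_of_subset_left hsV
    rw [this]
  have h0' : (0 : V) ∈ s' := by simpa [hs'] using h0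
  have haff : affineSpan ℝ s' = (⊤ : AffineSubspace ℝ V) := by
    refine AffineSubspace.ext_of_direction_eq ?_ ⟨0, subset_affineSpan ℝ s' h0', trivial⟩
    rw [direction_affineSpan, AffineSubspace.direction_top]
    apply le_antisymm le_top
    rw [← hspan']
    apply Submodule.span_le.mpr
    intro x hx
    have := vsub_mem_vectorSpan ℝ hx h0'
    simpa using this
  have hs'conv : Convex ℝ s' := hconv.linear_preimage V.subtype
  have hiff : (0:F) ∈ intrinsicInterior ℝ s ↔ (0:V) ∈ interior s' := by
    rw [← himg, AffineIsometry.image_intrinsicInterior,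
      GNP_intrinsicInterior_eq_interior_of_top s' haff]
    constructor
    · rintro ⟨y, hy, hy0⟩
      have : y = 0 := by
        apply Subtype.ext
        simpa using hy0
      rwa [this] at hy
    · intro hx
      exact ⟨0, hx, rfl⟩
  rw [hiff]
  constructor
  · intro hint x hx
    rcases Metric.isOpen_iff.mp isOpen_interior 0 hint with ⟨δ, hδ, hball⟩
    by_cases hx0 : x = 0
    · exact ⟨1, one_pos, by simpa [hx0] using h0⟩
    · set xV : V := ⟨x, hsV hx⟩ with hxV
      have hxn : ‖xV‖ ≠ 0 := by
        simp only [ne_eq, norm_eq_zero]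
        intro hc
        exact hx0 (by simpa [hxV] using congrArg (Subtype.val) hc)
      have hxn' : (0:ℝ) < ‖xV‖ := lt_of_le_of_ne (norm_nonneg _) (Ne.symm hxn)
      refine ⟨δ / (2 * ‖xV‖), by positivity, ?_⟩
      have hmem : -((δ / (2 * ‖xV‖)) • xV) ∈ interior s' := by
        apply hball
        simp only [Metric.mem_ball, dist_zero_right, norm_neg, norm_smul]
        rw [Real.norm_eq_abs, abs_of_pos (by positivity), div_mul_eq_mul_div,
          div_lt_iff₀ (by positivity : (0:ℝ) < 2 * ‖xV‖)]
        nlinarith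
      have htmp := interior_subset hmem
      have hco : ((-((δ / (2 * ‖xV‖)) • xV) : V) : F) = -((δ / (2 * ‖xV‖)) • x) := by
        simp [hxV]
      rw [hs', Set.mem_preimage] at htmp
      rwa [hco] at htmp
  · intro H
    obtain ⟨c, hc⟩ := Set.Nonempty.intrinsicInterior hs'conv ⟨0, h0'⟩
    rw [GNP_intrinsicInterior_eq_interior_of_top s' haff] at hc
    have hcs : (c : F) ∈ s := by
      have := interior_subset hc
      rwa [hs', Set.mem_preimage] at this
    obtain ⟨ε, hε, hεmem⟩ := H (c : F) hcs
    have hne : (1 + ε) ≠ 0 := by positivity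
    have hmem' : -(ε • c) ∈ s' := by
      simp only [hs', Set.mem_preimage]
      have hcast : ((-(ε • c) : V) : F) = -(ε • (c:F)) := by simp
      rw [hcast]; exact hεmem
    have hseg : (0:V) ∈ openSegment ℝ (c : V) (-(ε • c)) := by
      refine ⟨ε / (1 + ε), 1 / (1 + ε), by positivity, by positivity, ?_, ?_⟩
      · rw [← add_div, add_comm, div_self hne]
      · rw [smul_neg, smul_smul]
        have h1 : (1 / (1 + ε)) * ε = ε / (1 + ε) := by
          rw [one_div, inv_mul_eq_div]
        rw [h1, add_neg_cancel]
    exact hs'conv.openSegment_interior_closure_subset_interior hc (subset_closure hmem') hseg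

end Intrinsic

section Pieces

variable {A : Set (E d)} {I : Fin s → Set (E d)}

theorem GNP_zero_mem_pieceD (A : Set (E d)) (J : Set (E d)) : (0 : E d) ∈ pieceD A J := by
  intro v hv
  rw [inner_zero_left]
  have : (0:ℝ) ≤ ind J v := Set.indicator_nonneg (fun _ _ => zero_le_one) v
  linarith

theorem GNP_zero_mem_pieceN (A : Set (E d)) (I : Fin s → Set (E d)) (j : Fin s) :
    (0 : E d) ∈ pieceN A I j := by
  intro i m hm
  rw [inner_zero_right]
  split_ifs <;> norm_num

theorem GNP_convex_pieceD (A : Set (E d)) (J : Set (E d)) : Convex ℝ (pieceD A J) := by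
  intro m1 h1 m2 h2 a b ha hb hab
  intro v hv
  have e : (inner ℝ (a • m1 + b • m2) v : ℝ) = a * inner ℝ m1 v + b * inner ℝ m2 v := by
    rw [inner_add_left, real_inner_smul_left, real_inner_smul_left]
  rw [e]
  have hA := mul_le_mul_of_nonneg_left (h1 v hv) ha
  have hB := mul_le_mul_of_nonneg_left (h2 v hv) hb
  have hsum : a * -(ind J v) + b * -(ind J v) = -(ind J v) := by
    have h' : a * -(ind J v) + b * -(ind J v) = (a+b) * -(ind J v) := by ring
    rw [h', hab, one_mul]
  linarith

theorem GNP_convex_pieceN (A : Set (E d)) (I : Fin s → Set (E d)) (j : Fin s) :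
    Convex ℝ (pieceN A I j) := by
  intro y1 h1 y2 h2 a b ha hb hab
  intro i m hm
  have e : (inner ℝ m (a • y1 + b • y2) : ℝ) = a * inner ℝ m y1 + b * inner ℝ m y2 := by
    rw [inner_add_right, real_inner_smul_right, real_inner_smul_right]
  rw [e]
  have hA := mul_le_mul_of_nonneg_left (h1 i m hm) ha
  have hB := mul_le_mul_of_nonneg_left (h2 i m hm) hb
  have hsum : a * -(if i = j then (1:ℝ) else 0) + b * -(if i = j then (1:ℝ) else 0) = -(if i = j then (1:ℝ) else 0) := by
    have h' : a * -(if i = j then (1:ℝ) else 0) + b * -(if i = j then (1:ℝ) else 0) = (a+b) * -(if i = j then (1:ℝ) else 0) := by ring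
    rw [h', hab, one_mul]
  linarith

end Pieces


/-- irreducibility is preserved by duality. -/
theorem irreducible_dual (A : Set (E d)) (I : Fin s → Set (E d)) (hGNP : IsGNP A I)
    (hlat : IsLatticeSet (Vert A))
    (hirr : ¬ IsReduciblePieces (fun i => pieceD A (I i))) :
    ¬ IsReduciblePieces (fun j => pieceN A I j) := by
  classical
  rintro ⟨P, hPne, hPuniv, h0relint⟩
  obtain ⟨hpoly, hA0, ⟨hIsub, hIuniq⟩, hsumD⟩ := hGNP
  set D : Fin s → Set (E d) := fun i => pieceD A (I i) with hD
  set N : Fin s → Set (E d) := fun j => pieceN A I j with hN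
  set NP : Set (E d) := ∑ j ∈ P, N j with hNP
  -- basics
  have hD0 : ∀ i, (0:E d) ∈ D i := fun i => GNP_zero_mem_pieceD A (I i)
  have hN0 : ∀ j, (0:E d) ∈ N j := fun j => GNP_zero_mem_pieceN A I j
  have hNPconv : Convex ℝ NP := GNP_convex_finsetSum P N (fun j _ => GNP_convex_pieceN A I j)
  have hNP0 : (0:E d) ∈ NP := by
    have := GNP_mem_finsetSum P N (fun _ => 0) (fun j _ => hN0 j)
    simpa using this
  -- pairing
  have hpair : ∀ i j : Fin s, i ≠ j → ∀ m ∈ D i, ∀ y ∈ N j, (0:ℝ) ≤ inner ℝ m y := by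
    intro i j hij m hm y hy
    have := hy i m hm
    rwa [if_neg hij, neg_zero] at this
  -- relint characterization
  have hchar : ∀ y ∈ NP, ∃ ε : ℝ, 0 < ε ∧ -(ε • y) ∈ NP :=
    (GNP_zero_mem_intrinsicInterior_iff hNPconv hNP0).mp h0relint
  -- U and W
  set U : Submodule ℝ (E d) := Submodule.span ℝ NP with hU
  set W : Submodule ℝ (E d) := Uᗮ with hW
  -- D i ⊥ U for i ∉ P
  have hDW : ∀ i ∉ P, ∀ m ∈ D i, m ∈ W := by
    intro i hi m hm
    have hnn : ∀ y ∈ NP, (0:ℝ) ≤ inner ℝ m y := by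
      intro y hy
      rcases GNP_exists_rep hy with ⟨g, hg, rfl⟩
      rw [inner_sum]
      apply Finset.sum_nonneg
      intro j hj
      exact hpair i j (fun h => hi (h ▸ hj)) m hm (g j) (hg j hj)
    have hzero : ∀ y ∈ NP, (inner ℝ m y : ℝ) = 0 := by
      intro y hy
      obtain ⟨ε, hε, hmem⟩ := hchar y hy
      have h2 := hnn _ hmem
      rw [inner_neg_right, real_inner_smul_right] at h2
      have h1 := hnn y hy
      nlinarith
    rw [hW, Submodule.mem_orthogonal]
    intro u hu
    have : (inner ℝ m u : ℝ) = 0 := by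
      induction hu using Submodule.span_induction with
      | mem y hy => exact hzero y hy
      | zero => simp
      | add y z _ _ h1 h2 => rw [inner_add_right, h1, h2, add_zero]
      | smul r y _ h1 => rw [real_inner_smul_right, h1, mul_zero]
    rwa [real_inner_comm] at this
  -- N j ⊆ U for j ∈ P
  have hNU : ∀ j ∈ P, ∀ y ∈ N j, y ∈ U := by
    intro j hj y hy
    apply Submodule.subset_span
    have hrep : y = ∑ i ∈ P, (if i = j then y else 0) := by
      rw [Finset.sum_ite_eq' P j (fun _ => y), if_pos hj]
    rw [hNP]
    rw [hrep]
    apply GNP_mem_finsetSum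
    intro i hi
    by_cases h : i = j
    · subst h; simpa using hy
    · simp only [if_neg h]; exact hN0 i
  -- A bounded
  obtain ⟨Fset, hAF⟩ := hpoly
  have hAbdd : Bornology.IsBounded A := by
    rw [hAF]
    exact isBounded_convexHull.mpr Fset.finite_toSet.isBounded
  obtain ⟨R, hR⟩ := hAbdd.subset_closedBall 0
  -- pol A is compact and convex
  have hpolclosed : IsClosed (pol A) := by
    have hrw : pol A = ⋂ x ∈ A, {y : E d | (-1:ℝ) ≤ inner ℝ x y} := by
      ext y; simp [pol]
    rw [hrw]
    exact isClosed_biInter fun x _ =>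
      isClosed_le continuous_const (Continuous.inner continuous_const continuous_id)
  have hpolconv : Convex ℝ (pol A) := by
    intro y1 h1 y2 h2 a b ha hb hab x hx
    have e : (inner ℝ x (a • y1 + b • y2) : ℝ) = a * inner ℝ x y1 + b * inner ℝ x y2 := by
      rw [inner_add_right, real_inner_smul_right, real_inner_smul_right]
    rw [e]
    have hA := mul_le_mul_of_nonneg_left (h1 x hx) ha
    have hB := mul_le_mul_of_nonneg_left (h2 x hx) hb
    nlinarith
  obtain ⟨δ, hδpos, hδball⟩ := Metric.mem_nhds_iff.mp (mem_interior_iff_mem_nhds.mp hA0)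
  have hpolbdd : pol A ⊆ Metric.closedBall 0 (2/δ) := by
    intro y hy
    rcases eq_or_ne y 0 with rfl | hy0
    · simp; positivity
    have hyn : (0:ℝ) < ‖y‖ := norm_pos_iff.mpr hy0
    have hxA : -((δ/2) • (‖y‖⁻¹ • y)) ∈ A := by
      apply hδball
      have hnx : ‖-((δ/2) • (‖y‖⁻¹ • y))‖ = δ/2 := by
        rw [norm_neg, norm_smul, norm_smul, norm_inv, norm_norm, Real.norm_eq_abs,
          abs_of_pos (by positivity : (0:ℝ) < δ/2), inv_mul_cancel₀ (ne_of_gt hyn), mul_one]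
      rw [Metric.mem_ball, dist_zero_right, hnx]
      linarith
    have hineq := hy _ hxA
    have e : (inner ℝ (-((δ/2) • (‖y‖⁻¹ • y))) y : ℝ) = -((δ/2) * ‖y‖⁻¹ * (‖y‖*‖y‖)) := by
      rw [inner_neg_left, real_inner_smul_left, real_inner_smul_left,
        real_inner_self_eq_norm_mul_norm]
      ring
    rw [e] at hineq
    have e2 : (δ/2) * ‖y‖⁻¹ * (‖y‖*‖y‖) = (δ/2) * ‖y‖ := by
      field_simp
    rw [e2] at hineq
    simp only [Metric.mem_closedBall, dist_zero_right]
    rw [le_div_iff₀ hδpos]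
    nlinarith
  have hpolcomp : IsCompact (pol A) :=
    Metric.isCompact_of_isClosed_isBounded hpolclosed (Bornology.IsBounded.subset
      (Metric.isBounded_closedBall) hpolbdd)
  have hKM : closure (convexHull ℝ ((pol A).extremePoints ℝ)) = pol A :=
    closure_convexHull_extremePoints hpolcomp hpolconv
  -- vertices lie in some N j
  have hvertN : ∀ v ∈ Vert (pol A), ∃ j, v ∈ N j := by
    intro v hv
    obtain ⟨j, hj, hjuniq⟩ := hIuniq v hv
    refine ⟨j, ?_⟩
    intro i m hm
    have hmv := hm v hv
    by_cases hij : i = j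
    · subst hij
      rw [if_pos rfl]
      rwa [ind, Set.indicator_of_mem hj] at hmv
    · rw [if_neg hij, neg_zero]
      have hvnot : v ∉ I i := fun hvi => hij (hjuniq i hvi)
      rwa [ind, Set.indicator_of_notMem hvnot, neg_zero] at hmv
  -- the dagger lemma : D_P ∩ W = 0
  have hdagger : ∀ p, p ∈ (∑ i ∈ P, D i) → p ∈ W → p = 0 := by
    intro p hpP hpW
    rcases GNP_exists_rep hpP with ⟨g, hg, rfl⟩
    set p : E d := ∑ i ∈ P, g i with hp
    by_contra hp0
    have hpn : (0:ℝ) < ‖p‖ := norm_pos_iff.mpr hp0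
    -- halfspace
    set Hp : Set (E d) := {y | (0:ℝ) ≤ inner ℝ p y} with hHp
    have hHclosed : IsClosed Hp :=
      isClosed_le continuous_const (Continuous.inner continuous_const continuous_id)
    have hHconv : Convex ℝ Hp := by
      intro y1 h1 y2 h2 a b ha hb hab
      simp only [hHp, Set.mem_setOf_eq] at h1 h2 ⊢
      have e : (inner ℝ p (a • y1 + b • y2) : ℝ) = a * inner ℝ p y1 + b * inner ℝ p y2 := by
        rw [inner_add_right, real_inner_smul_right, real_inner_smul_right]
      rw [e]
      nlinarith [mul_le_mul_of_nonneg_left h1 ha, mul_le_mul_of_nonneg_left h2 hb]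
    -- all N j are inside Hp
    have hNsub : ∀ j, N j ⊆ Hp := by
      intro j y hy
      by_cases hjP : j ∈ P
      · have hyU : y ∈ U := hNU j hjP y hy
        have := (Submodule.mem_orthogonal U p).mp hpW y hyU
        simp only [hHp, Set.mem_setOf_eq]
        rw [real_inner_comm] at this
        rw [this]
      · simp only [hHp, Set.mem_setOf_eq]
        rw [hp, sum_inner]
        apply Finset.sum_nonneg
        intro i hi
        exact hpair i j (fun h => hjP (h ▸ hi)) (g i) (hg i hi) y hy
    -- pol A ⊆ Hp
    have hpolsub : pol A ⊆ Hp := by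
      rw [← hKM]
      apply closure_minimal (convexHull_min ?_ hHconv) hHclosed
      intro v hv
      rcases hvertN v hv with ⟨j, hvj⟩
      exact hNsub j hvj
    -- -λ p ∈ pol A
    set R' : ℝ := max R 0 + 1 with hR'
    have hR'pos : (0:ℝ) < R' := by positivity
    set lam : ℝ := 1 / (R' * ‖p‖) with hlam
    have hlampos : (0:ℝ) < lam := by positivity
    have hmem : -(lam • p) ∈ pol A := by
      intro x hx
      have hxR : ‖x‖ ≤ R' := by
        have := hR hx
        simp only [Metric.mem_closedBall, dist_zero_right] at this
        calc ‖x‖ ≤ R := this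
          _ ≤ max R 0 := le_max_left _ _
          _ ≤ R' := by rw [hR']; linarith
      have hcs := abs_real_inner_le_norm x (lam • p)
      have e : (inner ℝ x (-(lam • p)) : ℝ) = -(inner ℝ x (lam • p)) := by
        rw [inner_neg_right]
      rw [e]
      have hnorm : ‖lam • p‖ = lam * ‖p‖ := by
        rw [norm_smul, Real.norm_eq_abs, abs_of_pos hlampos]
      have hlp : lam * ‖p‖ = 1 / R' := by
        rw [hlam]
        field_simp
      have hbound : |(inner ℝ x (lam • p) : ℝ)| ≤ 1 := by
        calc |(inner ℝ x (lam • p) : ℝ)| ≤ ‖x‖ * ‖lam • p‖ := hcs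
          _ = ‖x‖ * (1/R') := by rw [hnorm, hlp]
          _ ≤ R' * (1/R') := by
              apply mul_le_mul_of_nonneg_right hxR
              positivity
          _ = 1 := by field_simp
      have := abs_le.mp hbound
      linarith [this.1]
    have hfinal := hpolsub hmem
    simp only [hHp, Set.mem_setOf_eq] at hfinal
    rw [inner_neg_right, real_inner_smul_right, real_inner_self_eq_norm_mul_norm] at hfinal
    nlinarith [mul_pos hlampos (mul_pos hpn hpn)]
  -- now conclude reducibility of the D pieces
  apply hirr
  have hPcne : (Pᶜ : Finset (Fin s)).Nonempty := by
    rw [Finset.nonempty_iff_ne_empty]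
    intro h
    exact hPuniv ((Finset.compl_eq_empty_iff P).mp h)
  refine ⟨Pᶜ, hPcne, ?_, ?_⟩
  · intro hc
    rw [Finset.compl_eq_univ_iff] at hc
    exact (hPne.ne_empty) hc
  · set DPc : Set (E d) := ∑ i ∈ Pᶜ, D i with hDPc
    have hDPcconv : Convex ℝ DPc :=
      GNP_convex_finsetSum Pᶜ D (fun i _ => GNP_convex_pieceD A (I i))
    have hDPc0 : (0:E d) ∈ DPc := by
      have := GNP_mem_finsetSum Pᶜ D (fun _ => 0) (fun i _ => hD0 i)
      simpa using this
    have hgoal : (0:E d) ∈ intrinsicInterior ℝ DPc := by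
      rw [GNP_zero_mem_intrinsicInterior_iff hDPcconv hDPc0]
      intro x hx
      -- x ∈ W
      have hxW : x ∈ W := by
        rcases GNP_exists_rep hx with ⟨g, hg, rfl⟩
        apply Submodule.sum_mem
        intro i hi
        exact hDW i (Finset.mem_compl.mp hi) (g i) (hg i hi)
      rcases eq_or_ne x 0 with rfl | hx0
      · exact ⟨1, one_pos, by simpa using hDPc0⟩
      have hxn : (0:ℝ) < ‖x‖ := norm_pos_iff.mpr hx0
      set ε : ℝ := δ / (2 * ‖x‖) with hε
      have hεpos : (0:ℝ) < ε := by positivity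
      have hmemA : -(ε • x) ∈ A := by
        apply hδball
        simp only [Metric.mem_ball, dist_zero_right, norm_neg, norm_smul, Real.norm_eq_abs,
          abs_of_pos hεpos]
        rw [hε, div_mul_eq_mul_div, div_lt_iff₀ (by positivity : (0:ℝ) < 2 * ‖x‖)]
        nlinarith
      -- split A as sum over P and Pᶜ
      have hsplit : (∑ i ∈ P, D i) + DPc = A := by
        rw [hDPc, ← hsumD]
        exact Finset.sum_add_sum_compl P D
      have hmem' : -(ε • x) ∈ (∑ i ∈ P, D i) + DPc := by rw [hsplit]; exact hmemA
      rcases Set.mem_add.mp hmem' with ⟨p, hp, q, hq, hpq⟩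
      have hqW : q ∈ W := by
        rcases GNP_exists_rep hq with ⟨g, hg, rfl⟩
        apply Submodule.sum_mem
        intro i hi
        exact hDW i (Finset.mem_compl.mp hi) (g i) (hg i hi)
      have hpW : p ∈ W := by
        have hxW' : -(ε • x) ∈ W := by
          apply Submodule.neg_mem
          exact Submodule.smul_mem _ _ hxW
        have : p = -(ε • x) - q := by rw [← hpq]; abel
        rw [this]
        exact Submodule.sub_mem _ hxW' hqW
      have hp0 : p = 0 := hdagger p hp hpW
      refine ⟨ε, hεpos, ?_⟩
      have : -(ε • x) = q := by rw [← hpq, hp0, zero_add]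
      rw [this]
      exact hq
    simpa using hgoal
  done

end GNPPaper
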